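/- An array A is (1̄,t)-locating if and only if it is (1,t)-locating and t-covering. -/

import Mathlib

/-- Row `r` of array `A` covers interaction `T`. -/
def covers {N k v : ℕ} (A : Fin N → Fin k → Fin v) (r : Fin N)
    (T : Finset (Fin k × Fin v)) : Prop := ∀ p ∈ T, A r p.1 = p.2

/-- `ρ_A(T)`: the set of rows of `A` covering interaction `T`. -/
def rho {N k v : ℕ} (A : Fin N → Fin k → Fin v)
    (T : Finset (Fin k × Fin v)) : Set (Fin N) := {r | covers A r T}

/-- `ρ_A(𝒯)` for a family of interactions. -/
def rhoFam {N k v : ℕ} (A : Fin N → Fin k → Fin v)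
    (𝒯 : Finset (Finset (Fin k × Fin v))) : Set (Fin N) := ⋃ T ∈ 𝒯, rho A T

/-- `T` is an interaction of strength `t`: `t` factor-value pairs with distinct factors. -/
def IsInteraction {k v : ℕ} (t : ℕ) (T : Finset (Fin k × Fin v)) : Prop :=
  T.card = t ∧ ∀ p ∈ T, ∀ q ∈ T, p ≠ q → p.1 ≠ q.1

/-- `A` is `t`-covering. -/
def Covering {N k v : ℕ} (t : ℕ) (A : Fin N → Fin k → Fin v) : Prop :=
  ∀ T : Finset (Fin k × Fin v), IsInteraction t T → (rho A T).Nonempty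

/-- `A` is `(d,t)`-locating. -/
def Locating {N k v : ℕ} (d t : ℕ) (A : Fin N → Fin k → Fin v) : Prop :=
  ∀ 𝒯₁ 𝒯₂ : Finset (Finset (Fin k × Fin v)),
    (∀ T ∈ 𝒯₁, IsInteraction t T) → (∀ T ∈ 𝒯₂, IsInteraction t T) →
    𝒯₁.card = d → 𝒯₂.card = d →
    (rhoFam A 𝒯₁ = rhoFam A 𝒯₂ ↔ 𝒯₁ = 𝒯₂)

/-- `A` is `(d̄,t)`-locating. -/
def LocatingBar {N k v : ℕ} (d t : ℕ) (A : Fin N → Fin k → Fin v) : Prop :=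
  ∀ 𝒯₁ 𝒯₂ : Finset (Finset (Fin k × Fin v)),
    (∀ T ∈ 𝒯₁, IsInteraction t T) → (∀ T ∈ 𝒯₂, IsInteraction t T) →
    𝒯₁.card ≤ d → 𝒯₂.card ≤ d →
    (rhoFam A 𝒯₁ = rhoFam A 𝒯₂ ↔ 𝒯₁ = 𝒯₂)

/-!
The only families that `(1̄,t)`-locating compares beyond `(1,t)`-locating are the empty family
against a singleton `{T}`; these are separated exactly when `ρ_A(T) ≠ ∅`, since `ρ_A(∅) = ∅`.
-/

section

variable {N k v t : ℕ} {A : Fin N → Fin k → Fin v}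

@[simp]
lemma rhoFam_empty (A : Fin N → Fin k → Fin v) : rhoFam A ∅ = ∅ := by
  simp [rhoFam]

@[simp]
lemma rhoFam_singleton (A : Fin N → Fin k → Fin v) (T : Finset (Fin k × Fin v)) :
    rhoFam A {T} = rho A T := by
  simp [rhoFam]

lemma Covering.rhoFam_eq_empty_iff (hcov : Covering t A) {𝒯 : Finset (Finset (Fin k × Fin v))}
    (h𝒯 : ∀ T ∈ 𝒯, IsInteraction t T) : rhoFam A 𝒯 = ∅ ↔ 𝒯 = ∅ := by
  refine ⟨fun h => ?_, fun h => h ▸ rhoFam_empty A⟩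
  by_contra hne
  obtain ⟨T, hT⟩ := Finset.nonempty_iff_ne_empty.mpr hne
  obtain ⟨r, hr⟩ := hcov T (h𝒯 T hT)
  have hr' : r ∈ rhoFam A 𝒯 := Set.mem_biUnion hT hr
  simp [h] at hr'

lemma LocatingBar.locating {d : ℕ} (h : LocatingBar d t A) : Locating d t A :=
  fun 𝒯₁ 𝒯₂ h₁ h₂ c₁ c₂ => h 𝒯₁ 𝒯₂ h₁ h₂ c₁.le c₂.le

lemma LocatingBar.covering {d : ℕ} (h : LocatingBar d t A) (hd : 1 ≤ d) : Covering t A := by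
  intro T hT
  rw [Set.nonempty_iff_ne_empty]
  intro hempty
  refine Finset.singleton_ne_empty T <|
    (h {T} ∅ (by simpa using hT) (by simp) (by simpa using hd) (by simp)).mp ?_
  simp [hempty]

lemma Locating.locatingBar_one (hloc : Locating 1 t A) (hcov : Covering t A) :
    LocatingBar 1 t A := by
  intro 𝒯₁ 𝒯₂ h₁ h₂ c₁ c₂
  rcases Nat.le_one_iff_eq_zero_or_eq_one.mp c₁ with c₁ | c₁
  · obtain rfl := Finset.card_eq_zero.mp c₁
    simpa [eq_comm] using hcov.rhoFam_eq_empty_iff h₂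
  rcases Nat.le_one_iff_eq_zero_or_eq_one.mp c₂ with c₂ | c₂
  · obtain rfl := Finset.card_eq_zero.mp c₂
    simpa using hcov.rhoFam_eq_empty_iff h₁
  exact hloc 𝒯₁ 𝒯₂ h₁ h₂ c₁ c₂

end

theorem locatingBar_iff {N k v t : ℕ} (A : Fin N → Fin k → Fin v) :
    LocatingBar 1 t A ↔ Locating 1 t A ∧ Covering t A :=
  ⟨fun h => ⟨h.locating, h.covering le_rfl⟩, fun ⟨hloc, hcov⟩ => hloc.locatingBar_one hcov⟩
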